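/- arXiv:1702.06460 — 2 statements merged into one kernel-verified Lean document; each statement's English description precedes it below -/
import Mathlib

section
/- Let λ, μ ∈ ℝ satisfy the strong convexity condition μ > 0 and 3λ + 2μ > 0. Let P : ℝ³ → ℝ be a harmonic homogeneous polynomial of degree n ≥ 0, set a = (2nλ + 2(3n+1)μ) / ((n+3)λ + (n+5)μ), and define the vector field 𝒩(x) = a P(x) x + (1 − a/(2n+1) − |x|²) ∇P(x). Then 𝒩 satisfies the Lamé (elastostatic) equation μ Δ𝒩 + (λ+μ) ∇(∇·𝒩) = 0 on ℝ³. -/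
open MeasureTheory Real
open scoped RealInnerProductSpace

noncomputable section

/-- Three-dimensional Euclidean space. -/
abbrev E3 : Type := EuclideanSpace ℝ (Fin 3)

/-- Build an element of `E3` from coordinates. -/
def toE3 (v : Fin 3 → ℝ) : E3 := (WithLp.equiv 2 (Fin 3 → ℝ)).symm v

/-- Partial derivative in the `i`-th coordinate direction. -/
def pd (f : E3 → ℝ) (i : Fin 3) (x : E3) : ℝ :=
  fderiv ℝ f x (EuclideanSpace.single i 1)

/-- The gradient, as the vector of partial derivatives. -/
def grad3 (f : E3 → ℝ) (x : E3) : E3 := toE3 fun i => pd f i x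

/-- The Laplacian: the sum of the second partial derivatives. -/
def lap3 (f : E3 → ℝ) (x : E3) : ℝ := ∑ i, pd (pd f i) i x

/-- Divergence of a vector field. -/
def div3 (u : E3 → E3) (x : E3) : ℝ := ∑ i, pd (fun y => u y i) i x

/-- Componentwise Laplacian of a vector field. -/
def vlap3 (u : E3 → E3) (x : E3) : E3 := toE3 fun i => lap3 (fun y => u y i) x

/-- Cross product in `ℝ³`. -/
def cross3 (u v : E3) : E3 :=
  toE3 ![u 1 * v 2 - u 2 * v 1, u 2 * v 0 - u 0 * v 2, u 0 * v 1 - u 1 * v 0]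

/-- The function `ℝ³ → ℝ` determined by a polynomial in three variables. -/
def polyFun (P : MvPolynomial (Fin 3) ℝ) : E3 → ℝ :=
  fun x => MvPolynomial.eval (fun i => x i) P

/-!
Every component of `𝒩` is a polynomial, so the Lamé operator can be evaluated in
`MvPolynomial`, where `∂ᵢ` becomes `pderiv i`. In dimension `d`, with `ΔP = 0`, Euler's identity
`∑ xⱼ ∂ⱼP = n P` and its `∂ᵢ`-derivative `∑ xⱼ ∂ⱼ∂ᵢP = (n - 1) ∂ᵢP` give, for the field
`a P x + (c - |x|²) ∇P` with any constant `c`,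
  `Δ𝒩ᵢ = (2a - 2d - 4n + 4) ∂ᵢP`  and  `∇·𝒩 = (a (n + d) - 2n) P`.
So `μ Δ𝒩 + (λ + μ) ∇(∇·𝒩)` is a scalar multiple of `∇P`, and for `d = 3` the given `a` is
exactly the value that makes this scalar vanish.
-/

namespace MvPolynomial

variable {R σ : Type*} [CommRing R]

theorem pderiv_pderiv_comm (i j : σ) (p : MvPolynomial σ R) :
    pderiv i (pderiv j p) = pderiv j (pderiv i p) := by
  have h : ⁅pderiv i, pderiv j⁆ = (0 : Derivation R (MvPolynomial σ R) (MvPolynomial σ R)) :=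
    derivation_ext fun k => by
      classical
      rw [Derivation.commutator_apply, pderiv_X, pderiv_X, Pi.single_apply, Pi.single_apply]
      split_ifs <;> simp
  rw [← sub_eq_zero, ← Derivation.commutator_apply, h, Derivation.zero_apply]

variable [Fintype σ]

def laplacian : MvPolynomial σ R →ₗ[R] MvPolynomial σ R :=
  ∑ j, (pderiv j).toLinearMap ∘ₗ (pderiv j).toLinearMap

theorem laplacian_apply (p : MvPolynomial σ R) : laplacian p = ∑ j, pderiv j (pderiv j p) := by
  simp [laplacian]

theorem laplacian_C (a : R) : laplacian (C a : MvPolynomial σ R) = 0 := by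
  simp [laplacian_apply]

theorem laplacian_mul (p q : MvPolynomial σ R) :
    laplacian (p * q) = laplacian p * q + 2 * ∑ j, pderiv j p * pderiv j q + p * laplacian q := by
  simp only [laplacian_apply, pderiv_mul, map_add, Finset.mul_sum, Finset.sum_mul,
    ← Finset.sum_add_distrib]
  exact Finset.sum_congr rfl fun j _ => by ring

theorem laplacian_pderiv (i : σ) (p : MvPolynomial σ R) :
    laplacian (pderiv i p) = pderiv i (laplacian p) := by
  simp [laplacian_apply, pderiv_pderiv_comm i]

def normSq : MvPolynomial σ R := ∑ j, X j ^ 2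

theorem laplacian_X (i : σ) : laplacian (X i : MvPolynomial σ R) = 0 := by
  classical simp [laplacian_apply, pderiv_X, Pi.single_apply, apply_ite (pderiv _)]

theorem pderiv_normSq (i : σ) : pderiv i (normSq : MvPolynomial σ R) = 2 * X i := by
  classical simp [normSq, pderiv_X, Pi.single_apply]

theorem laplacian_normSq : laplacian (normSq : MvPolynomial σ R) = 2 * Fintype.card σ := by
  simp only [laplacian_apply, pderiv_normSq, two_mul, map_add, pderiv_X_self, Finset.sum_const,
    Finset.card_univ, nsmul_eq_mul]
  ring

theorem IsHomogeneous.sum_X_mul_pderiv_pderiv {n : ℕ} {p : MvPolynomial σ R}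
    (h : p.IsHomogeneous n) (i : σ) :
    ∑ j, X j * pderiv j (pderiv i p) = ((n : MvPolynomial σ R) - 1) * pderiv i p := by
  have := congrArg (pderiv i) h.sum_X_mul_pderiv
  classical
  simp only [map_sum, Derivation.leibniz, pderiv_X, nsmul_eq_mul, Derivation.map_natCast,
    Pi.single_apply, smul_eq_mul, Finset.sum_add_distrib, mul_ite, mul_one, mul_zero,
    Finset.sum_ite_eq', Finset.mem_univ, if_true, pderiv_pderiv_comm i] at this
  linear_combination this

def nField (a c : R) (p : MvPolynomial σ R) (i : σ) : MvPolynomial σ R :=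
  C a * p * X i + (C c - normSq) * pderiv i p

variable {n : ℕ} {p : MvPolynomial σ R}

theorem laplacian_nField (hharm : laplacian p = 0) (hhom : p.IsHomogeneous n) (a c : R)
    (i : σ) :
    laplacian (nField a c p i) = C (2 * a - 2 * Fintype.card σ - 4 * n + 4) * pderiv i p := by
  classical
  simp only [nField, map_add, map_sub, laplacian_mul, laplacian_C, laplacian_X, laplacian_normSq,
    laplacian_pderiv, hharm, pderiv_C, pderiv_normSq, pderiv_X, Pi.single_apply,
    mul_ite, mul_one, mul_zero, zero_mul, zero_sub, map_zero, Finset.sum_ite_eq, Finset.mem_univ,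
    if_true, Finset.sum_const_zero, neg_mul, mul_assoc, Finset.sum_neg_distrib, ← Finset.mul_sum,
    hhom.sum_X_mul_pderiv_pderiv i, map_mul, map_natCast, map_ofNat]
  ring

theorem sum_pderiv_nField (hharm : laplacian p = 0) (hhom : p.IsHomogeneous n) (a c : R) :
    ∑ i, pderiv i (nField a c p i) = C (a * (n + Fintype.card σ) - 2 * n) * p := by
  classical
  have hE := hhom.sum_X_mul_pderiv
  rw [nsmul_eq_mul] at hE
  rw [laplacian_apply] at hharm
  simp only [nField, map_add, map_sub, Derivation.leibniz, pderiv_C, pderiv_normSq, pderiv_X,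
    Pi.single_apply, if_true, smul_eq_mul, mul_one, mul_zero, add_zero, zero_sub, mul_neg, mul_add,
    Finset.sum_add_distrib, Finset.sum_neg_distrib, Finset.sum_const, Finset.card_univ,
    nsmul_eq_mul, ← Finset.mul_sum, mul_left_comm _ (C a), mul_left_comm _ (2 : MvPolynomial σ R),
    mul_comm (pderiv _ p) (X _), hharm, hE, map_mul, map_natCast, map_ofNat]
  ring

theorem lame_nField (hharm : laplacian p = 0) (hhom : p.IsHomogeneous n) {lam mu a : R} (c : R)
    (hcoef : mu * (2 * a - 2 * Fintype.card σ - 4 * n + 4) +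
      (lam + mu) * (a * (n + Fintype.card σ) - 2 * n) = 0) (i : σ) :
    C mu * laplacian (nField a c p i) + C (lam + mu) * pderiv i (∑ j, pderiv j (nField a c p j)) =
      0 := by
  rw [laplacian_nField hharm hhom, sum_pderiv_nField hharm hhom, pderiv_C_mul, ← mul_assoc,
    ← mul_assoc, ← map_mul, ← map_mul, ← add_mul, ← map_add, hcoef, map_zero, zero_mul]

end MvPolynomial

open MvPolynomial

theorem hasFDerivAt_polyFun (P : MvPolynomial (Fin 3) ℝ) (x : E3) :
    HasFDerivAt (polyFun P)
      (∑ j, polyFun (pderiv j P) x • (EuclideanSpace.proj j : E3 →L[ℝ] ℝ)) x := by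
  induction P using MvPolynomial.induction_on with
  | C a =>
    have hfun : polyFun (C a) = fun _ => a := funext fun _ => eval_C a
    rw [hfun]
    exact (hasFDerivAt_const a x).congr_fderiv (by simp [polyFun])
  | add p q hp hq =>
    have hfun : polyFun (p + q) = fun y => polyFun p y + polyFun q y :=
      funext fun y => map_add _ p q
    rw [hfun]
    refine (hp.add hq).congr_fderiv ?_
    simp [polyFun, add_smul, Finset.sum_add_distrib]
  | mul_X p i hp =>
    have hfun : polyFun (p * X i) = fun y => polyFun p y * y i := by
      ext y; simp [polyFun]
    rw [hfun]
    refine (hp.mul (EuclideanSpace.proj i : E3 →L[ℝ] ℝ).hasFDerivAt).congr_fderiv ?_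
    ext v
    classical
    simp [polyFun, pderiv_X, Pi.single_apply, apply_ite (eval _), ite_mul, add_mul,
      Finset.sum_add_distrib, Finset.mul_sum, mul_assoc]

theorem pd_polyFun (P : MvPolynomial (Fin 3) ℝ) (i : Fin 3) :
    pd (polyFun P) i = polyFun (pderiv i P) := by
  ext x
  simp [pd, (hasFDerivAt_polyFun P x).fderiv]

theorem lap3_polyFun (P : MvPolynomial (Fin 3) ℝ) : lap3 (polyFun P) = polyFun (laplacian P) := by
  ext x
  simp [lap3, pd_polyFun, laplacian_apply, polyFun]

theorem polyFun_injective : Function.Injective polyFun := by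
  intro P Q h
  exact MvPolynomial.funext fun v => congrFun h (toE3 v)

theorem polyFun_nField (a c : ℝ) (P : MvPolynomial (Fin 3) ℝ) (i : Fin 3) (y : E3) :
    polyFun (nField a c P i) y =
      ((a * polyFun P y) • y + (c - ‖y‖ ^ 2) • grad3 (polyFun P) y) i := by
  simp [nField, normSq, polyFun, grad3, toE3, pd_polyFun, EuclideanSpace.real_norm_sq_eq]

theorem lame_apply_eq_polyFun {u : E3 → E3} {Q : Fin 3 → MvPolynomial (Fin 3) ℝ}
    (hu : ∀ i, (fun y => u y i) = polyFun (Q i)) (lam mu : ℝ) (x : E3) (i : Fin 3) :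
    (mu • vlap3 u x + (lam + mu) • grad3 (div3 u) x) i =
      polyFun (C mu * laplacian (Q i) + C (lam + mu) * pderiv i (∑ j, pderiv j (Q j))) x := by
  have hdiv : div3 u = polyFun (∑ j, pderiv j (Q j)) := by
    ext y
    simp [div3, hu, pd_polyFun, polyFun]
  simp [vlap3, grad3, toE3, hu, lap3_polyFun, hdiv, pd_polyFun, polyFun]

/-- under the strong convexity condition `μ > 0`, `3λ + 2μ > 0`, for a harmonic
homogeneous polynomial `P` of degree `n` and `a = (2nλ + 2(3n+1)μ)/((n+3)λ + (n+5)μ)`,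
the field `𝒩(x) = a P(x) x + (1 − a/(2n+1) − |x|²) ∇P(x)` satisfies the Lamé equation
`μ Δ𝒩 + (λ+μ) ∇(∇·𝒩) = 0` on `ℝ³`. -/
theorem N_field_satisfies_lame (lam mu : ℝ) (hmu : 0 < mu) (hconv : 0 < 3 * lam + 2 * mu)
    (n : ℕ) (P : MvPolynomial (Fin 3) ℝ)
    (hhom : P.IsHomogeneous n)
    (hharm : ∀ x, lap3 (polyFun P) x = 0) :
    let a : ℝ := (2 * (n : ℝ) * lam + 2 * (3 * (n : ℝ) + 1) * mu) /
      (((n : ℝ) + 3) * lam + ((n : ℝ) + 5) * mu)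
    let N : E3 → E3 := fun y => (a * polyFun P y) • y +
      (1 - a / (2 * (n : ℝ) + 1) - ‖y‖ ^ 2) • grad3 (polyFun P) y
    ∀ x : E3, mu • vlap3 N x + (lam + mu) • grad3 (div3 N) x = 0 := by
  intro a N x
  have hden : 0 < ((n : ℝ) + 3) * lam + ((n : ℝ) + 5) * mu := by
    nlinarith [(n.cast_nonneg : (0 : ℝ) ≤ n)]
  have ha : a * (((n : ℝ) + 3) * lam + ((n : ℝ) + 5) * mu) =
      2 * (n : ℝ) * lam + 2 * (3 * (n : ℝ) + 1) * mu :=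
    div_mul_cancel₀ _ hden.ne'
  have hcoef : mu * (2 * a - 2 * Fintype.card (Fin 3) - 4 * n + 4) +
      (lam + mu) * (a * (n + Fintype.card (Fin 3)) - 2 * n) = 0 := by
    simp only [Fintype.card_fin, Nat.cast_ofNat]
    linear_combination ha
  have hlap : laplacian P = 0 := polyFun_injective (by rw [← lap3_polyFun]; exact funext hharm)
  have hN (i : Fin 3) : (fun y => N y i) = polyFun (nField a (1 - a / (2 * n + 1)) P i) :=
    funext fun y => (polyFun_nField _ _ P i y).symm
  ext i
  rw [lame_apply_eq_polyFun hN, lame_nField hlap hhom _ hcoef]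
  simp [polyFun]

end
end

section
/- Let α ∈ ℝ and let h : ℝ³ \ {0} → ℝ be a smooth harmonic function that is positively homogeneous of degree α, i.e. h(t x) = t^α h(x) for all t > 0 and x ≠ 0. Define u(x) = ∇h(x) × x. Then for every x ∈ ℝ³ \ {0}, (∇u(x) + ∇u(x)ᵗ) x = (α − 1) u(x). In particular, since ∇·u = 0, for any λ, μ ∈ ℝ the traction of u on the unit sphere satisfies λ(∇·u)(x) x + μ(∇u(x) + ∇u(x)ᵗ) x = μ(α − 1) u(x) for all |x| = 1. -/
open MeasureTheory Real Matrix
open scoped RealInnerProductSpace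

noncomputable section

/-- The Jacobian matrix `(∇u)_{ij} = ∂u_i/∂x_j` of a vector field. -/
def jac3 (u : E3 → E3) (x : E3) : Matrix (Fin 3) (Fin 3) ℝ :=
  Matrix.of fun i j => fderiv ℝ (fun y => u y i) x (EuclideanSpace.single j 1)

lemma toE3_apply (v : Fin 3 → ℝ) (i : Fin 3) : toE3 v i = v i := rfl

/-- Derivative of `y ↦ f y * y b - g y * y d` in direction `e_j`. -/
lemma pd_sub_mul (f g : E3 → ℝ) (x : E3) (hf : DifferentiableAt ℝ f x)
    (hg : DifferentiableAt ℝ g x) (b d j : Fin 3) :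
    fderiv ℝ (fun y : E3 => f y * y b - g y * y d) x (EuclideanSpace.single j 1)
      = pd f j x * x b + f x * (if b = j then 1 else 0)
        - (pd g j x * x d + g x * (if d = j then 1 else 0)) := by
  have Hb : HasFDerivAt (fun y : E3 => y b) (EuclideanSpace.proj b : E3 →L[ℝ] ℝ) x :=
    (EuclideanSpace.proj b : E3 →L[ℝ] ℝ).hasFDerivAt
  have Hd : HasFDerivAt (fun y : E3 => y d) (EuclideanSpace.proj d : E3 →L[ℝ] ℝ) x :=
    (EuclideanSpace.proj d : E3 →L[ℝ] ℝ).hasFDerivAt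
  have H := ((hf.hasFDerivAt.mul Hb).sub (hg.hasFDerivAt.mul Hd)).fderiv
  rw [show (fun y : E3 => f y * y b - g y * y d) = ((f * fun y : E3 => y b) - g * fun y : E3 => y d) from rfl, H]
  simp only [pd, ContinuousLinearMap.coe_sub', Pi.sub_apply, ContinuousLinearMap.add_apply,
    ContinuousLinearMap.coe_smul', Pi.smul_apply, smul_eq_mul]
  simp [EuclideanSpace.single_apply]
  ring

theorem main_aux (α : ℝ) (h : E3 → ℝ)
    (hsmooth : ContDiffOn ℝ (⊤ : ℕ∞) h {(0 : E3)}ᶜ)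
    (hhomog : ∀ t : ℝ, 0 < t → ∀ x : E3, x ≠ 0 → h (t • x) = t ^ α * h x)
    (x : E3) (hx : x ≠ 0) :
    toE3 ((jac3 (fun y => cross3 (grad3 h y) y) x
        + (jac3 (fun y => cross3 (grad3 h y) y) x)ᵀ).mulVec fun i => x i)
      = (α - 1) • cross3 (grad3 h x) x
    ∧ div3 (fun y => cross3 (grad3 h y) y) x = 0 := by
  have hCA : ∀ y : E3, y ≠ 0 → ContDiffAt ℝ (⊤ : ℕ∞) h y := fun y hy =>
    hsmooth.contDiffAt (isOpen_compl_singleton.mem_nhds hy)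
  have hpdCA : ∀ (a : Fin 3) (y : E3), y ≠ 0 → ContDiffAt ℝ (⊤ : ℕ∞) (pd h a) y := by
    intro a y hy
    have h1 : ContDiffAt ℝ (⊤ : ℕ∞) (fderiv ℝ h) y := (hCA y hy).fderiv_right (by simp)
    exact ((ContinuousLinearMap.apply ℝ ℝ
      (EuclideanSpace.single a (1:ℝ))).contDiff.contDiffAt).comp y h1
  have hpdD : ∀ (a : Fin 3) (y : E3), y ≠ 0 → DifferentiableAt ℝ (pd h a) y := fun a y hy =>
    (hpdCA a y hy).differentiableAt (by simp)
  -- homogeneity of the partial derivatives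
  have hom : ∀ (j : Fin 3) (t : ℝ), 0 < t → ∀ y : E3, y ≠ 0 →
      pd h j (t • y) = t ^ (α - 1) * pd h j y := by
    intro j t ht y hy
    have hty : t • y ≠ 0 := smul_ne_zero (ne_of_gt ht) hy
    have hev : (fun z : E3 => h (t • z)) =ᶠ[nhds y] fun z => t ^ α * h z := by
      filter_upwards [isOpen_compl_singleton.eventually_mem hy] with z hz
      exact hhomog t ht z hz
    have hsmul : HasFDerivAt (fun z : E3 => t • z)
        (t • (ContinuousLinearMap.id ℝ E3)) y :=
      (hasFDerivAt_id y).const_smul t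
    have hdh : HasFDerivAt h (fderiv ℝ h (t • y)) (t • y) :=
      ((hCA _ hty).differentiableAt (by simp)).hasFDerivAt
    have hF : HasFDerivAt (fun z : E3 => h (t • z))
        ((fderiv ℝ h (t • y)).comp (t • (ContinuousLinearMap.id ℝ E3))) y :=
      hdh.comp y hsmul
    have hG : HasFDerivAt (fun z : E3 => t ^ α * h z)
        (t ^ α • fderiv ℝ h y) y :=
      (((hCA y hy).differentiableAt (by simp)).hasFDerivAt).const_mul (t ^ α)
    have hG' : HasFDerivAt (fun z : E3 => h (t • z)) (t ^ α • fderiv ℝ h y) y :=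
      hG.congr_of_eventuallyEq hev
    have heq := hF.unique hG'
    have heval := congrArg (fun L : E3 →L[ℝ] ℝ => L (EuclideanSpace.single j 1)) heq
    simp only [ContinuousLinearMap.coe_comp', Function.comp_apply,
      ContinuousLinearMap.coe_smul', Pi.smul_apply, ContinuousLinearMap.coe_id', id_eq,
      _root_.map_smul, smul_eq_mul] at heval
    have key : t * pd h j (t • y) = t ^ α * pd h j y := heval
    have htne : t ≠ 0 := ne_of_gt ht
    have hpow : t ^ α = t * t ^ (α - 1) := by
      have hα : α = 1 + (α - 1) := by ring
      rw [hα, Real.rpow_add ht, Real.rpow_one]; ring_nf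
    exact mul_left_cancel₀ htne (key.trans (by rw [hpow]; ring))
  -- Euler identity for the partial derivatives
  have eulerF : ∀ j : Fin 3, fderiv ℝ (pd h j) x x = (α - 1) * pd h j x := by
    intro j
    have hD : HasFDerivAt (pd h j) (fderiv ℝ (pd h j) x) x := (hpdD j x hx).hasFDerivAt
    have hc : HasDerivAt (fun t : ℝ => t • x) x 1 := by
      simpa using (hasDerivAt_id (1:ℝ)).smul_const x
    have hD1 : HasFDerivAt (pd h j) (fderiv ℝ (pd h j) x) ((1:ℝ) • x) := by
      rwa [one_smul]
    have hφ : HasDerivAt (fun t : ℝ => pd h j (t • x)) (fderiv ℝ (pd h j) x x) 1 :=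
      by have := hD1.comp_hasDerivAt 1 hc; exact this
    have hψ : HasDerivAt (fun t : ℝ => pd h j (t • x)) ((α - 1) * pd h j x) 1 := by
      have hev : (fun t : ℝ => pd h j (t • x)) =ᶠ[nhds 1]
          fun t => t ^ (α - 1) * pd h j x := by
        filter_upwards [eventually_gt_nhds one_pos] with t ht
        exact hom j t ht x hx
      have hr : HasDerivAt (fun t : ℝ => t ^ (α - 1) * pd h j x)
          ((α - 1) * pd h j x) 1 := by
        have := (Real.hasDerivAt_rpow_const (x := (1:ℝ)) (p := α - 1)
          (Or.inl one_ne_zero)).mul_const (pd h j x)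
        simpa using this
      exact hr.congr_of_eventuallyEq hev
    exact hφ.unique hψ
  have euler : ∀ j : Fin 3,
      x 0 * pd (pd h j) 0 x + x 1 * pd (pd h j) 1 x + x 2 * pd (pd h j) 2 x
        = (α - 1) * pd h j x := by
    intro j
    have hx' : x = x 0 • EuclideanSpace.single 0 (1:ℝ) + x 1 • EuclideanSpace.single 1 1
        + x 2 • EuclideanSpace.single 2 1 := by
      ext i; fin_cases i <;>
        simp [PiLp.add_apply, PiLp.smul_apply, EuclideanSpace.single_apply]
    have hlin : fderiv ℝ (pd h j) x x
        = x 0 * pd (pd h j) 0 x + x 1 * pd (pd h j) 1 x + x 2 * pd (pd h j) 2 x := by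
      calc fderiv ℝ (pd h j) x x
          = fderiv ℝ (pd h j) x (x 0 • EuclideanSpace.single 0 (1:ℝ)
              + x 1 • EuclideanSpace.single 1 1 + x 2 • EuclideanSpace.single 2 1) := by
            rw [← hx']
        _ = x 0 * pd (pd h j) 0 x + x 1 * pd (pd h j) 1 x + x 2 * pd (pd h j) 2 x := by
            rw [map_add, map_add, _root_.map_smul, _root_.map_smul, _root_.map_smul]
            rfl
    rw [← hlin]
    exact eulerF j
  -- symmetry of second derivatives
  have sym : ∀ a b : Fin 3, pd (pd h a) b x = pd (pd h b) a x := by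
    have hd1 : DifferentiableAt ℝ (fderiv ℝ h) x :=
      ((hCA x hx).fderiv_right (m := ((⊤ : ℕ∞) : WithTop ℕ∞)) (by simp)).differentiableAt (by simp)
    have hsym := (hCA x hx).isSymmSndFDerivAt (by simp; rw [← WithTop.coe_ofNat]; exact WithTop.coe_le_coe.mpr le_top)
    have key : ∀ a b : Fin 3, pd (pd h a) b x
        = fderiv ℝ (fderiv ℝ h) x (EuclideanSpace.single b 1) (EuclideanSpace.single a 1) := by
      intro a b
      have : pd h a = fun y => (fderiv ℝ h y) (EuclideanSpace.single a (1:ℝ)) := rfl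
      rw [pd, this, fderiv_clm_apply hd1 (differentiableAt_const _)]
      simp
    intro a b
    rw [key a b, key b a, hsym]
  -- Jacobian entries
  set U : E3 → E3 := fun y => cross3 (grad3 h y) y with hU
  have hu0 : (fun y : E3 => U y 0) = fun y => pd h 1 y * y 2 - pd h 2 y * y 1 := rfl
  have hu1 : (fun y : E3 => U y 1) = fun y => pd h 2 y * y 0 - pd h 0 y * y 2 := rfl
  have hu2 : (fun y : E3 => U y 2) = fun y => pd h 0 y * y 1 - pd h 1 y * y 0 := rfl
  have J0 : ∀ j, jac3 U x 0 j
      = pd (pd h 1) j x * x 2 + pd h 1 x * (if (2:Fin 3) = j then 1 else 0)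
        - (pd (pd h 2) j x * x 1 + pd h 2 x * (if (1:Fin 3) = j then 1 else 0)) := by
    intro j
    show fderiv ℝ (fun y => U y 0) x (EuclideanSpace.single j 1) = _
    rw [hu0]
    exact pd_sub_mul _ _ x (hpdD 1 x hx) (hpdD 2 x hx) 2 1 j
  have J1 : ∀ j, jac3 U x 1 j
      = pd (pd h 2) j x * x 0 + pd h 2 x * (if (0:Fin 3) = j then 1 else 0)
        - (pd (pd h 0) j x * x 2 + pd h 0 x * (if (2:Fin 3) = j then 1 else 0)) := by
    intro j
    show fderiv ℝ (fun y => U y 1) x (EuclideanSpace.single j 1) = _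
    rw [hu1]
    exact pd_sub_mul _ _ x (hpdD 2 x hx) (hpdD 0 x hx) 0 2 j
  have J2 : ∀ j, jac3 U x 2 j
      = pd (pd h 0) j x * x 1 + pd h 0 x * (if (1:Fin 3) = j then 1 else 0)
        - (pd (pd h 1) j x * x 0 + pd h 1 x * (if (0:Fin 3) = j then 1 else 0)) := by
    intro j
    show fderiv ℝ (fun y => U y 2) x (EuclideanSpace.single j 1) = _
    rw [hu2]
    exact pd_sub_mul _ _ x (hpdD 0 x hx) (hpdD 1 x hx) 1 0 j
  have hc0 : cross3 (grad3 h x) x 0 = pd h 1 x * x 2 - pd h 2 x * x 1 := rfl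
  have hc1 : cross3 (grad3 h x) x 1 = pd h 2 x * x 0 - pd h 0 x * x 2 := rfl
  have hc2 : cross3 (grad3 h x) x 2 = pd h 0 x * x 1 - pd h 1 x * x 0 := rfl
  constructor
  · have comp0 : ((jac3 U x + (jac3 U x)ᵀ).mulVec fun i => x i) 0
        = (α - 1) * (pd h 1 x * x 2 - pd h 2 x * x 1) := by
      simp only [Matrix.mulVec, dotProduct, Fin.sum_univ_three, Matrix.add_apply,
        Matrix.transpose_apply, J0, J1, J2]
      simp only [Fin.reduceEq, if_true, if_false, ite_true, ite_false, reduceIte,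
        mul_one, mul_zero, add_zero, zero_add, sub_zero]
      linear_combination x 2 * euler 1 - x 1 * euler 2
    have comp1 : ((jac3 U x + (jac3 U x)ᵀ).mulVec fun i => x i) 1
        = (α - 1) * (pd h 2 x * x 0 - pd h 0 x * x 2) := by
      simp only [Matrix.mulVec, dotProduct, Fin.sum_univ_three, Matrix.add_apply,
        Matrix.transpose_apply, J0, J1, J2]
      simp only [Fin.reduceEq, if_true, if_false, ite_true, ite_false, reduceIte,
        mul_one, mul_zero, add_zero, zero_add, sub_zero]
      linear_combination x 0 * euler 2 - x 2 * euler 0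
    have comp2 : ((jac3 U x + (jac3 U x)ᵀ).mulVec fun i => x i) 2
        = (α - 1) * (pd h 0 x * x 1 - pd h 1 x * x 0) := by
      simp only [Matrix.mulVec, dotProduct, Fin.sum_univ_three, Matrix.add_apply,
        Matrix.transpose_apply, J0, J1, J2]
      simp only [Fin.reduceEq, if_true, if_false, ite_true, ite_false, reduceIte,
        mul_one, mul_zero, add_zero, zero_add, sub_zero]
      linear_combination x 1 * euler 0 - x 0 * euler 1
    ext i
    rw [toE3_apply]
    fin_cases i
    · exact comp0.trans (by rw [← hc0]; rfl)
    · exact comp1.trans (by rw [← hc1]; rfl)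
    · exact comp2.trans (by rw [← hc2]; rfl)
  · have e0 : pd (fun y => U y 0) 0 x = jac3 U x 0 0 := rfl
    have e1 : pd (fun y => U y 1) 1 x = jac3 U x 1 1 := rfl
    have e2 : pd (fun y => U y 2) 2 x = jac3 U x 2 2 := rfl
    rw [div3, Fin.sum_univ_three, e0, e1, e2, J0, J1, J2]
    simp only [Fin.reduceEq, if_true, if_false, ite_true, ite_false, reduceIte,
      mul_one, mul_zero, add_zero, zero_add, sub_zero]
    linear_combination x 0 * sym 2 1 + x 1 * sym 0 2 + x 2 * sym 1 0

/-- for a smooth harmonic function `h` on `ℝ³ \ {0}`, positively homogeneous of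
degree `α`, the field `u(x) = ∇h(x) × x` satisfies `(∇u(x) + ∇u(x)ᵗ) x = (α − 1) u(x)` for
`x ≠ 0`; in particular on the unit sphere the traction of `u` equals `μ(α − 1) u(x)`. -/
theorem traction_of_T_field (α : ℝ) (h : E3 → ℝ)
    (hsmooth : ContDiffOn ℝ (⊤ : ℕ∞) h {(0 : E3)}ᶜ)
    (hharm : ∀ x : E3, x ≠ 0 → lap3 h x = 0)
    (hhomog : ∀ t : ℝ, 0 < t → ∀ x : E3, x ≠ 0 → h (t • x) = t ^ α * h x) :
    let u : E3 → E3 := fun x => cross3 (grad3 h x) x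
    (∀ x : E3, x ≠ 0 →
      toE3 ((jac3 u x + (jac3 u x)ᵀ).mulVec fun i => x i) = (α - 1) • u x) ∧
    (∀ (lam mu : ℝ) (x : E3), ‖x‖ = 1 →
      (lam * div3 u x) • x + mu • toE3 ((jac3 u x + (jac3 u x)ᵀ).mulVec fun i => x i)
        = (mu * (α - 1)) • u x) := by
  intro u
  constructor
  · intro x hx
    exact (main_aux α h hsmooth hhomog x hx).1
  · intro lam mu x hxn
    have hx : x ≠ 0 := by
      intro h0
      rw [h0] at hxn
      simp at hxn
    have H := main_aux α h hsmooth hhomog x hx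
    rw [H.2, H.1, mul_zero, zero_smul, zero_add, smul_smul]

end
end
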